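/- arXiv:2509.18950 — 5 statements merged into one kernel-verified Lean document; each statement's English description precedes it below -/
import Mathlib

section
/- Let {n_1,…,n_k} and {m_1,…,m_k} be sequences of positive integers such that n_i divides n_{i+1} and m_i divides m_{i+1} for all 1 ≤ i ≤ k−1. If for every positive integer l one has ∏_{i=1}^{k} l/gcd(l,n_i) = ∏_{i=1}^{k} l/gcd(l,m_i), then n_i = m_i for every 1 ≤ i ≤ k. -/
/-!
Since `l / gcd(l, n) * gcd(l, n) = l`, the hypothesis says that `l ↦ ∏ gcd(l, n_i)` is the same
function for both chains. Suppose `n_i = m_i` for `i < j` and take `l = n_j`. By the divisibility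
chain, `gcd(n_j, n_i)` is `n_i` for `i < j` and `n_j` for `i ≥ j`; cancelling the common factors
`i < j` leaves `∏_{i ≥ j} gcd(n_j, m_i) = n_j ^ #{i ≥ j}`, a product of divisors of `n_j`, so every
factor is `n_j`. Thus `n_j ∣ m_j`, and `m_j ∣ n_j` by symmetry.
-/

open Finset

lemma dvd_of_forall_dvd_succ {k : ℕ} {a : ℕ → ℕ}
    (hda : ∀ i, 1 ≤ i → i + 1 ≤ k → a i ∣ a (i + 1)) {i j : ℕ}
    (hi : 1 ≤ i) (hij : i ≤ j) (hj : j ≤ k) : a i ∣ a j := by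
  induction j, hij using Nat.le_induction with
  | base => rfl
  | succ j hij ih => exact (ih (by omega)).trans (hda j (by omega) hj)

lemma prod_div_gcd_mul_prod_gcd {ι : Type*} (s : Finset ι) (l : ℕ) (f : ι → ℕ) :
    (∏ i ∈ s, l / Nat.gcd l (f i)) * ∏ i ∈ s, Nat.gcd l (f i) = l ^ #s := by
  rw [← prod_mul_distrib, ← prod_const]
  exact prod_congr rfl fun i _ => Nat.div_mul_cancel (Nat.gcd_dvd_left l (f i))

lemma prod_gcd_eq_of_prod_div_gcd_eq {ι : Type*} (s : Finset ι) {l : ℕ} (hl : 0 < l)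
    {f g : ι → ℕ} (h : ∏ i ∈ s, l / Nat.gcd l (f i) = ∏ i ∈ s, l / Nat.gcd l (g i)) :
    ∏ i ∈ s, Nat.gcd l (f i) = ∏ i ∈ s, Nat.gcd l (g i) := by
  have hpos : 0 < ∏ i ∈ s, l / Nat.gcd l (f i) :=
    prod_pos fun i _ => Nat.div_pos (Nat.gcd_le_left _ hl) (Nat.gcd_pos_of_pos_left _ hl)
  apply Nat.eq_of_mul_eq_mul_left hpos
  rw [prod_div_gcd_mul_prod_gcd, h, prod_div_gcd_mul_prod_gcd]

lemma eq_of_dvd_of_prod_eq_pow {ι : Type*} {s : Finset ι} {f : ι → ℕ} {M : ℕ} (hM : 0 < M)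
    (hdvd : ∀ i ∈ s, f i ∣ M) (hprod : ∏ i ∈ s, f i = M ^ #s) {i : ι} (hi : i ∈ s) :
    f i = M := by
  refine le_antisymm (Nat.le_of_dvd hM (hdvd i hi)) (not_lt.mp fun hlt => ?_)
  have hlt_prod : ∏ i ∈ s, f i < ∏ _i ∈ s, M :=
    prod_lt_prod (fun i hi => Nat.pos_of_dvd_of_pos (hdvd i hi) hM)
      (fun i hi => Nat.le_of_dvd hM (hdvd i hi)) ⟨i, hi, hlt⟩
  rw [prod_const, ← hprod] at hlt_prod
  exact lt_irrefl _ hlt_prod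

lemma dvd_of_prod_gcd_eq {k : ℕ} {a b : ℕ → ℕ}
    (hda : ∀ i, 1 ≤ i → i + 1 ≤ k → a i ∣ a (i + 1))
    (hg : ∀ l : ℕ, 0 < l →
      ∏ i ∈ Icc 1 k, Nat.gcd l (a i) = ∏ i ∈ Icc 1 k, Nat.gcd l (b i))
    {j : ℕ} (hj1 : 1 ≤ j) (hjk : j ≤ k) (haj : 0 < a j)
    (hprev : ∀ i, 1 ≤ i → i < j → a i = b i) :
    a j ∣ b j := by
  set low := (Icc 1 k).filter (· < j)
  set high := (Icc 1 k).filter (¬ · < j)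
  have hsplit (f : ℕ → ℕ) : ∏ i ∈ Icc 1 k, f i = (∏ i ∈ low, f i) * ∏ i ∈ high, f i :=
    (prod_filter_mul_prod_filter_not _ _ f).symm
  have hlow : ∀ i ∈ low, Nat.gcd (a j) (a i) = Nat.gcd (a j) (b i) := by
    intro i hi
    simp only [low, mem_filter, mem_Icc] at hi
    rw [hprev i hi.1.1 hi.2]
  have hhigh : ∀ i ∈ high, Nat.gcd (a j) (a i) = a j := by
    intro i hi
    simp only [high, mem_filter, mem_Icc] at hi
    exact Nat.gcd_eq_left (dvd_of_forall_dvd_succ hda hj1 (by omega) hi.1.2)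
  have hhigh_prod : ∏ i ∈ high, Nat.gcd (a j) (b i) = a j ^ #high := by
    have hpos : 0 < ∏ i ∈ low, Nat.gcd (a j) (b i) :=
      prod_pos fun i _ => Nat.gcd_pos_of_pos_left _ haj
    have := hg (a j) haj
    rw [hsplit, hsplit, prod_congr rfl hlow, prod_congr rfl hhigh, prod_const] at this
    exact (Nat.eq_of_mul_eq_mul_left hpos this).symm
  have hj : j ∈ high := by simp only [high, mem_filter, mem_Icc]; omega
  rw [← eq_of_dvd_of_prod_eq_pow haj (fun i _ => Nat.gcd_dvd_left _ _) hhigh_prod hj]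
  exact Nat.gcd_dvd_right _ _

theorem stmt5 (k : ℕ) (a b : ℕ → ℕ)
    (ha : ∀ i, 1 ≤ i → i ≤ k → 0 < a i)
    (hb : ∀ i, 1 ≤ i → i ≤ k → 0 < b i)
    (hda : ∀ i, 1 ≤ i → i + 1 ≤ k → a i ∣ a (i + 1))
    (hdb : ∀ i, 1 ≤ i → i + 1 ≤ k → b i ∣ b (i + 1))
    (h : ∀ l : ℕ, 0 < l →
      ∏ i ∈ Finset.Icc 1 k, l / Nat.gcd l (a i) =
      ∏ i ∈ Finset.Icc 1 k, l / Nat.gcd l (b i)) :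
    ∀ i, 1 ≤ i → i ≤ k → a i = b i := by
  have hg (l : ℕ) (hl : 0 < l) := prod_gcd_eq_of_prod_div_gcd_eq _ hl (h l hl)
  intro j
  induction j using Nat.strong_induction_on with
  | _ j ih =>
    intro hj1 hjk
    have hprev (i : ℕ) (hi : 1 ≤ i) (hij : i < j) : a i = b i := ih i hij hi (by omega)
    exact Nat.dvd_antisymm
      (dvd_of_prod_gcd_eq hda hg hj1 hjk (ha j hj1 hjk) hprev)
      (dvd_of_prod_gcd_eq hdb (fun l hl => (hg l hl).symm) hj1 hjk (hb j hj1 hjk)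
        fun i hi hij => (hprev i hi hij).symm)
end

section
/- Let n ≥ 2 be odd, let m' be an even positive integer, set d = gcd(2n, m'), m = m'/d, and m* = m'/2. Let F be the (n−1)×(n−1) integer matrix with F_{1j} = n−j, F_{j+1,j} = −n, and all other entries 0. Define ν : (ℤ/m'ℤ)^{n−1} → (ℤ/m'ℤ)^{n−1} by ν(p) = 2·p·F (row vector times matrix). Then the image of ν has cardinality m*·m^{n−2}. -/
/-!
Write `c` for the first row of `F`; its last entry is `1`, so the last coordinate of `ν p` is
`2 p₀`. Subtracting `(ν p)_last` times `c` (with its last entry replaced by `0`) from `ν p` is an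
injective shear, and it turns `ν p` into `(-2n p₁, …, -2n p_{n-2}, 2 p₀)`: a diagonal map composed
with a cyclic shift of the coordinates. Hence the image of `ν` is as large as the product of the
images of `x ↦ 2x` and of `n - 2` copies of `x ↦ -2n x` on `ℤ/m'ℤ`, which have `m'/2` and
`m'/gcd(2n, m')` elements.
-/

open Matrix Set

theorem ZMod.card_range_natCast_mul (m : ℕ) {a : ℕ} (ha : a ≠ 0) :
    Nat.card (range fun x : ZMod m => (a : ZMod m) * x) = m / m.gcd a := by
  have hrange :
      (range fun x : ZMod m => (a : ZMod m) * x) = AddSubgroup.zmultiples (a : ZMod m) := by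
    rw [← ZMod.intCast_surjective.range_comp]
    ext
    simp [AddSubgroup.mem_zmultiples_iff, zsmul_eq_mul, mul_comm]
  rw [hrange]
  exact (Nat.card_zmultiples _).trans (ZMod.addOrderOf_coe' m ha)

theorem range_neg_mul {R : Type*} [Ring R] (a : R) :
    (range fun x : R => -a * x) = range fun x => a * x := by
  rw [← neg_surjective.range_comp]
  simp [Function.comp_def]

theorem Nat.card_range_piMap {ι : Type*} [Fintype ι] {α β : ι → Type*} (f : ∀ i, α i → β i) :
    Nat.card (range (Pi.map f)) = ∏ i, Nat.card (range (f i)) := by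
  rw [range_piMap, Nat.card_congr (Equiv.Set.univPi _), Nat.card_pi]

theorem sub_apply_smul_injective {ι R : Type*} [Ring R] {i : ι} {e : ι → R} (he : e i = 0) :
    Function.Injective fun q : ι → R => q - q i • e := by
  intro q q' h
  have hi : q i = q' i := by simpa [he] using congrFun h i
  simpa [hi] using h

section FirstRowSubdiagonal

variable {R : Type*} [CommRing R] {N : ℕ} {F : Matrix (Fin (N + 1)) (Fin (N + 1)) R}
  {c : Fin (N + 1) → R} {t : R}

theorem vecMul_castSucc_of_firstRow_subdiagonal
    (hF : ∀ i j : Fin (N + 1),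
      F i j = if i.val = 0 then c j else if i.val = j.val + 1 then t else 0)
    (p : Fin (N + 1) → R) (k : Fin N) :
    vecMul p F k.castSucc = p 0 * c k.castSucc + p k.succ * t := by
  simp [vecMul, dotProduct, Fin.sum_univ_succ, hF, Fin.val_inj]

theorem vecMul_last_of_firstRow_subdiagonal
    (hF : ∀ i j : Fin (N + 1),
      F i j = if i.val = 0 then c j else if i.val = j.val + 1 then t else 0)
    (p : Fin (N + 1) → R) :
    vecMul p F (Fin.last N) = p 0 * c (Fin.last N) := by
  simp [vecMul, dotProduct, Fin.sum_univ_succ, hF, Fin.val_last, Nat.ne_of_lt]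

theorem shear_smul_vecMul_of_firstRow_subdiagonal
    (hF : ∀ i j : Fin (N + 1),
      F i j = if i.val = 0 then c j else if i.val = j.val + 1 then t else 0)
    (hc : c (Fin.last N) = 1) (a : R) (p : Fin (N + 1) → R) :
    a • vecMul p F - (a • vecMul p F) (Fin.last N) • Function.update c (Fin.last N) 0 =
      fun j => (if j = Fin.last N then a else a * t) * p (finRotate _ j) := by
  funext j
  cases j using Fin.lastCases with
  | last => simp [vecMul_last_of_firstRow_subdiagonal hF, hc]
  | cast k =>
    simp [vecMul_castSucc_of_firstRow_subdiagonal hF, vecMul_last_of_firstRow_subdiagonal hF, hc,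
      Fin.castSucc_ne_last, Fin.coeSucc_eq_succ]
    ring

theorem card_range_smul_vecMul_of_firstRow_subdiagonal
    (hF : ∀ i j : Fin (N + 1),
      F i j = if i.val = 0 then c j else if i.val = j.val + 1 then t else 0)
    (hc : c (Fin.last N) = 1) (a : R) :
    Nat.card (range fun p => a • vecMul p F) =
      Nat.card (range fun x : R => a * x) * Nat.card (range fun x : R => a * t * x) ^ N := by
  set d : Fin (N + 1) → R := fun j => if j = Fin.last N then a else a * t
  have hshear := sub_apply_smul_injective (R := R) (Function.update_self (Fin.last N) 0 c)
  have hrotate : Function.Surjective fun p : Fin (N + 1) → R => p ∘ finRotate _ :=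
    (Equiv.arrowCongr (finRotate _).symm (Equiv.refl R)).surjective
  calc Nat.card (range fun p => a • vecMul p F)
      = Nat.card (range fun p => Pi.map (fun j x => d j * x) (p ∘ finRotate _)) := by
        rw [← Nat.card_image_of_injective hshear, ← range_comp]
        congr 3
        exact funext (shear_smul_vecMul_of_firstRow_subdiagonal hF hc a)
    _ = ∏ j, Nat.card (range fun x => d j * x) := by
        rw [← Nat.card_range_piMap, ← hrotate.range_comp (Pi.map fun j x => d j * x)]
        rfl
    _ = _ := by
        simp [Fin.prod_univ_castSucc, d, Fin.castSucc_ne_last, mul_comm]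

end FirstRowSubdiagonal

theorem stmt6_general (n m' : ℕ) (hn : 2 ≤ n)
    (heven : Even m')
    (F : Matrix (Fin (n - 1)) (Fin (n - 1)) (ZMod m'))
    (hF : ∀ i j : Fin (n - 1), F i j =
      if i.val = 0 then (((n : ℤ) - (j.val + 1) : ℤ) : ZMod m')
      else if i.val = j.val + 1 then ((-(n : ℤ) : ℤ) : ZMod m') else 0) :
    Nat.card (Set.range fun p : Fin (n - 1) → ZMod m' =>
        (2 : ZMod m') • Matrix.vecMul p F) =
      (m' / 2) * (m' / Nat.gcd (2 * n) m') ^ (n - 2) := by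
  obtain ⟨N, rfl⟩ : ∃ N, n = N + 2 := ⟨n - 2, by omega⟩
  have hc : ((((N + 2 : ℕ) : ℤ) - ((Fin.last N).val + 1) : ℤ) : ZMod m') = 1 := by
    push_cast; ring
  have hneg : (2 : ZMod m') * ((-((N + 2 : ℕ) : ℤ) : ℤ) : ZMod m') =
      -((2 * (N + 2) : ℕ) : ZMod m') := by
    push_cast; ring
  refine (card_range_smul_vecMul_of_firstRow_subdiagonal (N := N) hF hc 2).trans ?_
  rw [hneg, range_neg_mul, ← Nat.cast_ofNat, ZMod.card_range_natCast_mul m' two_ne_zero,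
    ZMod.card_range_natCast_mul m' (by omega), Nat.gcd_eq_right (even_iff_two_dvd.mp heven),
    Nat.gcd_comm]
  rfl

theorem stmt6 (n m' : ℕ) (hn : 2 ≤ n) (hodd : Odd n)
    (hm : 0 < m') (heven : Even m')
    (F : Matrix (Fin (n - 1)) (Fin (n - 1)) (ZMod m'))
    (hF : ∀ i j : Fin (n - 1), F i j =
      if i.val = 0 then (((n : ℤ) - (j.val + 1) : ℤ) : ZMod m')
      else if i.val = j.val + 1 then ((-(n : ℤ) : ℤ) : ZMod m') else 0) :
    Nat.card (Set.range fun p : Fin (n - 1) → ZMod m' =>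
        (2 : ZMod m') • Matrix.vecMul p F) =
      (m' / 2) * (m' / Nat.gcd (2 * n) m') ^ (n - 2) :=
  stmt6_general n m' hn heven F hF
end

section
/- Let n ≥ 2, let m' be an even positive integer, set d = gcd(2n, m') and m* = m'/2. Let F be the (n−1)×(n−1) integer matrix with F_{1j} = n−j, F_{j+1,j} = −n, and 0 otherwise, and let ν : (ℤ/m'ℤ)^{n−1} → (ℤ/m'ℤ)^{n−1}, ν(p) = 2pF. Then p = (p_1,…,p_{n−1}) lies in the kernel of ν if and only if p_1 ≡ 0 (mod m*) and n·p_i ≡ 0 (mod m*) for all 2 ≤ i ≤ n−1; consequently, if n is odd, |ker ν| = 2·d^{n−2}. -/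
lemma card_ker (m c : ℕ) (hm : 0 < m) :
    Nat.card {x : ZMod m | (c : ZMod m) * x = 0} = Nat.gcd c m := by
  haveI : NeZero m := ⟨hm.ne'⟩
  set f : ZMod m →+ ZMod m := AddMonoidHom.mulLeft (c : ZMod m) with hf
  have hset : {x : ZMod m | (c : ZMod m) * x = 0} = (f.ker : Set (ZMod m)) := rfl
  have hrange : f.range = AddSubgroup.zmultiples ((c : ℕ) : ZMod m) := by
    ext x
    simp only [AddMonoidHom.mem_range, AddSubgroup.mem_zmultiples_iff]
    constructor
    · rintro ⟨y, rfl⟩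
      exact ⟨(y.val : ℤ), by
        show _ = (c : ZMod m) * y
        rw [zsmul_eq_mul]
        push_cast
        rw [ZMod.natCast_val, ZMod.cast_id]
        ring⟩
    · rintro ⟨k, rfl⟩
      exact ⟨(k : ZMod m), by show (c : ZMod m) * _ = _; rw [zsmul_eq_mul]; ring⟩
  have hcr : Nat.card f.range = m / Nat.gcd m c := by
    rw [hrange, Nat.card_zmultiples, ZMod.addOrderOf_coe c hm.ne']
  have htot : Nat.card (ZMod m) = Nat.card (ZMod m ⧸ f.ker) * Nat.card f.ker :=
    AddSubgroup.card_eq_card_quotient_mul_card_addSubgroup f.ker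
  have hq : Nat.card (ZMod m ⧸ f.ker) = Nat.card f.range :=
    Nat.card_congr (QuotientAddGroup.quotientKerEquivRange f).toEquiv
  have hZ : Nat.card (ZMod m) = m := Nat.card_zmod m
  rw [hset]
  have hgd : Nat.gcd m c ∣ m := Nat.gcd_dvd_left m c
  have hgpos : 0 < Nat.gcd m c := Nat.gcd_pos_of_pos_left c hm
  have : m = (m / Nat.gcd m c) * Nat.card f.ker := by
    conv_lhs => rw [← hZ]
    rw [htot, hq, hcr]
  have hdpos : 0 < m / Nat.gcd m c := Nat.div_pos (Nat.le_of_dvd hm hgd) hgpos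
  have : Nat.card f.ker = Nat.gcd m c := by
    have h2 : m / Nat.gcd m c * Nat.card f.ker = m / Nat.gcd m c * Nat.gcd m c := by
      rw [← this, Nat.div_mul_cancel hgd]
    exact Nat.eq_of_mul_eq_mul_left hdpos h2
  rw [Nat.gcd_comm]
  exact this

lemma entry_lemma (n m' : ℕ) (hn : 2 ≤ n)
    (F : Matrix (Fin (n - 1)) (Fin (n - 1)) (ZMod m'))
    (hF : ∀ i j : Fin (n - 1), F i j =
      if i.val = 0 then (((n : ℤ) - (j.val + 1) : ℤ) : ZMod m')
      else if i.val = j.val + 1 then ((-(n : ℤ) : ℤ) : ZMod m') else 0)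
    (P : Fin (n - 1) → ZMod m') (j : Fin (n - 1)) :
    Matrix.vecMul P F j = P ⟨0, by omega⟩ * (((n : ℤ) - (j.val + 1) : ℤ) : ZMod m') +
      (if h : j.val + 1 < n - 1 then P ⟨j.val + 1, h⟩ * ((-(n : ℤ) : ℤ) : ZMod m') else 0) := by
  have hsum : Matrix.vecMul P F j = ∑ i : Fin (n - 1), P i * F i j := by
    simp [Matrix.vecMul, dotProduct]
  rw [hsum]
  by_cases h : j.val + 1 < n - 1
  · rw [dif_pos h]
    rw [Finset.sum_eq_add_of_mem ⟨0, by omega⟩ ⟨j.val + 1, h⟩ (Finset.mem_univ _)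
      (Finset.mem_univ _) (by simp [Fin.ext_iff]) ?_]
    · rw [hF, hF]
      simp
    · rintro k - ⟨hk0, hk1⟩
      rw [hF]
      rw [if_neg (by simpa [Fin.ext_iff] using hk0), if_neg (by simpa [Fin.ext_iff] using hk1),
        mul_zero]
  · rw [dif_neg h, add_zero]
    rw [Finset.sum_eq_single_of_mem ⟨0, by omega⟩ (Finset.mem_univ _) ?_]
    · rw [hF]; simp
    · rintro k - hk0
      rw [hF]
      rw [if_neg (by simpa [Fin.ext_iff] using hk0), if_neg (by omega), mul_zero]

lemma prod_if_const (N x y : ℕ) (hN : 0 < N) (f : ℕ → ℕ) :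
    (∏ i : Fin N, f (if (i : ℕ) = 0 then x else y)) = f x * f y ^ (N - 1) := by
  obtain ⟨k, rfl⟩ : ∃ k, N = k + 1 := ⟨N - 1, by omega⟩
  rw [Fin.prod_univ_succ]
  simp

theorem stmt7 (n m' : ℕ) (hn : 2 ≤ n) (hm : 0 < m') (heven : Even m')
    (F : Matrix (Fin (n - 1)) (Fin (n - 1)) (ZMod m'))
    (hF : ∀ i j : Fin (n - 1), F i j =
      if i.val = 0 then (((n : ℤ) - (j.val + 1) : ℤ) : ZMod m')
      else if i.val = j.val + 1 then ((-(n : ℤ) : ℤ) : ZMod m') else 0) :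
    (∀ p : Fin (n - 1) → ℤ,
      ((2 : ZMod m') • Matrix.vecMul (fun i => ((p i : ℤ) : ZMod m')) F = 0 ↔
        (((m' / 2 : ℕ) : ℤ) ∣ p ⟨0, by omega⟩ ∧
          ∀ i : Fin (n - 1), 1 ≤ i.val → ((m' / 2 : ℕ) : ℤ) ∣ (n : ℤ) * p i))) ∧
    (Odd n →
      Nat.card {p : Fin (n - 1) → ZMod m' | (2 : ZMod m') • Matrix.vecMul p F = 0} =
        2 * (Nat.gcd (2 * n) m') ^ (n - 2)) := by
  obtain ⟨m₀, hm0⟩ := heven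
  have hm0' : m' = 2 * m₀ := by omega
  have hhalf : m' / 2 = m₀ := by omega
  have hm0pos : 0 < m₀ := by omega
  have hsm : ∀ P : Fin (n - 1) → ZMod m',
      ((2 : ZMod m') • Matrix.vecMul P F = 0 ↔
        ∀ j : Fin (n - 1), (2 : ZMod m') * Matrix.vecMul P F j = 0) := by
    intro P
    rw [funext_iff]
    apply forall_congr'
    intro j
    simp
  constructor
  · -- part 1
    intro p
    set pe : ℕ → ℤ := fun k => if h : k < n - 1 then p ⟨k, h⟩ else 0 with hpe
    set E : Fin (n - 1) → ℤ :=
      fun j => pe 0 * ((n : ℤ) - (j.val + 1)) - (n : ℤ) * pe (j.val + 1) with hEdef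
    set P : Fin (n - 1) → ZMod m' := fun i => ((p i : ℤ) : ZMod m') with hP
    have hE : ∀ j, Matrix.vecMul P F j = ((E j : ℤ) : ZMod m') := by
      intro j
      rw [entry_lemma n m' hn F hF P j]
      simp only [hEdef, hpe, hP]
      rw [dif_pos (by omega : (0 : ℕ) < n - 1)]
      by_cases h : j.val + 1 < n - 1
      · rw [dif_pos h, dif_pos h]
        push_cast
        ring
      · rw [dif_neg h, dif_neg h]
        push_cast
        ring
    rw [hsm P]
    have hiff : ∀ j, ((2 : ZMod m') * Matrix.vecMul P F j = 0 ↔ ((m₀ : ℤ) ∣ E j)) := by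
      intro j
      rw [hE j]
      rw [show (2 : ZMod m') * ((E j : ℤ) : ZMod m') = ((2 * E j : ℤ) : ZMod m') by push_cast; ring]
      rw [ZMod.intCast_zmod_eq_zero_iff_dvd]
      rw [show (m' : ℤ) = 2 * (m₀ : ℤ) by exact_mod_cast congrArg Nat.cast hm0']
      exact mul_dvd_mul_iff_left (two_ne_zero)
    rw [forall_congr' hiff, hhalf]
    constructor
    · intro h
      have hlast := h ⟨n - 2, by omega⟩
      have hE0 : E ⟨n - 2, by omega⟩ = pe 0 := by
        simp only [hEdef]
        rw [show pe (n - 2 + 1) = 0 by rw [hpe]; exact dif_neg (by omega)]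
        rw [show ((n : ℤ) - (((n - 2 : ℕ) : ℤ) + 1)) = 1 by omega]
        ring
      rw [hE0] at hlast
      have hpe0 : pe 0 = p ⟨0, by omega⟩ := by rw [hpe]; exact dif_pos (by omega)
      refine ⟨by rwa [hpe0] at hlast, ?_⟩
      intro i hi
      have hj := h ⟨i.val - 1, by omega⟩
      simp only [hEdef] at hj
      have hidx : (⟨i.val - 1, by omega⟩ : Fin (n - 1)).val + 1 = i.val := by
        simp; omega
      rw [hidx] at hj
      have hpei : pe i.val = p i := dif_pos i.isLt
      rw [hpei] at hj
      have : (m₀ : ℤ) ∣ pe 0 * ((n : ℤ) - (((⟨i.val - 1, by omega⟩ : Fin (n - 1)).val : ℤ) + 1)) :=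
        Dvd.dvd.mul_right hlast _
      have := dvd_sub this hj
      simpa using this
    · rintro ⟨h0, h1⟩ j
      simp only [hEdef]
      have hpe0 : pe 0 = p ⟨0, by omega⟩ := by rw [hpe]; exact dif_pos (by omega)
      have hd0 : (m₀ : ℤ) ∣ pe 0 := by rw [hpe0]; exact h0
      have hd1 : (m₀ : ℤ) ∣ (n : ℤ) * pe (j.val + 1) := by
        by_cases h : j.val + 1 < n - 1
        · rw [show pe (j.val + 1) = p ⟨j.val + 1, h⟩ from dif_pos h]
          exact h1 ⟨j.val + 1, h⟩ (by simp)
        · rw [show pe (j.val + 1) = 0 from dif_neg h]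
          simp
      exact dvd_sub (hd0.mul_right _) hd1
  · -- part 2
    intro _
    have hchar : ∀ P : Fin (n - 1) → ZMod m',
        ((2 : ZMod m') • Matrix.vecMul P F = 0 ↔
          ∀ i : Fin (n - 1),
            (((if i.val = 0 then 2 else 2 * n : ℕ) : ℕ) : ZMod m') * P i = 0) := by
      intro P
      rw [hsm P]
      constructor
      · intro h i
        have h2p0 : (2 : ZMod m') * P ⟨0, by omega⟩ = 0 := by
          have hlast := h ⟨n - 2, by omega⟩
          rw [entry_lemma n m' hn F hF P ⟨n - 2, by omega⟩] at hlast
          rw [dif_neg (by simp; omega)] at hlast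
          rw [show ((n : ℤ) - (((⟨n - 2, by omega⟩ : Fin (n - 1)).val : ℤ) + 1)) = 1 by
            simp; omega] at hlast
          simpa using hlast
        by_cases hi : i.val = 0
        · have : i = ⟨0, by omega⟩ := by exact Fin.ext hi
          rw [if_pos hi, this]
          push_cast
          exact h2p0
        · rw [if_neg hi]
          have hj := h ⟨i.val - 1, by omega⟩
          rw [entry_lemma n m' hn F hF P ⟨i.val - 1, by omega⟩] at hj
          have hlt : (⟨i.val - 1, by omega⟩ : Fin (n - 1)).val + 1 < n - 1 ∨
              (⟨i.val - 1, by omega⟩ : Fin (n - 1)).val + 1 = i.val := by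
            right; simp; omega
          have hidx : (⟨i.val - 1, by omega⟩ : Fin (n - 1)).val + 1 = i.val := by simp; omega
          rw [dif_pos (by omega : (⟨i.val - 1, by omega⟩ : Fin (n - 1)).val + 1 < n - 1)] at hj
          have hieq : (⟨(⟨i.val - 1, by omega⟩ : Fin (n - 1)).val + 1, by omega⟩ : Fin (n - 1))
              = i := Fin.ext hidx
          rw [hieq] at hj
          push_cast at hj ⊢
          linear_combination ((n : ZMod m') - (((i.val - 1 : ℕ) : ZMod m') + 1)) * h2p0 - hj
      · intro h j
        have h2p0 : (2 : ZMod m') * P ⟨0, by omega⟩ = 0 := by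
          have := h ⟨0, by omega⟩
          rw [if_pos rfl] at this
          push_cast at this
          exact this
        rw [entry_lemma n m' hn F hF P j]
        by_cases hlt : j.val + 1 < n - 1
        · rw [dif_pos hlt]
          have hji := h ⟨j.val + 1, hlt⟩
          rw [if_neg (by simp)] at hji
          push_cast at hji ⊢
          linear_combination ((n : ZMod m') - ((j.val : ZMod m') + 1)) * h2p0 - hji
        · rw [dif_neg hlt]
          push_cast
          linear_combination ((n : ZMod m') - ((j.val : ZMod m') + 1)) * h2p0
    have hseteq : {p : Fin (n - 1) → ZMod m' | (2 : ZMod m') • Matrix.vecMul p F = 0} =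
        {p : Fin (n - 1) → ZMod m' | ∀ i : Fin (n - 1),
          (((if i.val = 0 then 2 else 2 * n : ℕ) : ℕ) : ZMod m') * p i = 0} := by
      ext p
      exact hchar p
    rw [hseteq]
    have hcard1 : Nat.card {p : Fin (n - 1) → ZMod m' | ∀ i : Fin (n - 1),
        (((if i.val = 0 then 2 else 2 * n : ℕ) : ℕ) : ZMod m') * p i = 0} =
        Nat.card (∀ i : Fin (n - 1),
          {x : ZMod m' | (((if i.val = 0 then 2 else 2 * n : ℕ) : ℕ) : ZMod m') * x = 0}) :=
      Nat.card_congr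
        { toFun := fun p i => ⟨p.1 i, p.2 i⟩
          invFun := fun f => ⟨fun i => (f i).1, fun i => (f i).2⟩
          left_inv := fun _ => rfl
          right_inv := fun _ => rfl }
    have hcard : Nat.card {p : Fin (n - 1) → ZMod m' | ∀ i : Fin (n - 1),
        (((if i.val = 0 then 2 else 2 * n : ℕ) : ℕ) : ZMod m') * p i = 0} =
        ∏ i : Fin (n - 1), Nat.gcd (if i.val = 0 then 2 else 2 * n) m' := by
      rw [hcard1, Nat.card_pi]
      exact Finset.prod_congr rfl fun i _ => card_ker m' _ hm
    rw [hcard]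
    have hstep : (∏ i : Fin (n - 1), Nat.gcd (if (i : ℕ) = 0 then 2 else 2 * n) m') =
        Nat.gcd 2 m' * Nat.gcd (2 * n) m' ^ (n - 1 - 1) :=
      prod_if_const (n - 1) 2 (2 * n) (Nat.sub_pos_of_lt hn) (fun t => Nat.gcd t m')
    rw [hstep, Nat.gcd_eq_left ⟨m₀, hm0'⟩,
      (by rw [Nat.sub_sub] : n - 1 - 1 = n - 2)]
end

section
/- Let n ≥ 2, let m' be an even positive integer, set d = gcd(2n, m'), m = m'/d, and n' = 2n/d. Let G be the (n−1)×(n−1) integer matrix with G_{ij} = min(i,j)(n−max(i,j)), and let S = {k ∈ (ℤ/m'ℤ)^{n−1} : k_i = k_{n−i} for all i} be the subgroup of palindromic vectors. The map ν̄ : S → S given by ν̄(p) = 2pG is well defined, and |im ν̄| = 2·m^{⌊n/2⌋} if n is even and n' is odd, while |im ν̄| = m^{⌊n/2⌋} otherwise. -/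
open Finset

-- Abel-type summation against min coefficients
lemma S9.abel {R : Type*} [CommRing R] (b : ℕ → R) (I : ℕ) :
    ∀ F : ℕ, ∑ s ∈ range F, ((min I (s+1) : ℕ) : R) * (b s - b (s+1)) =
      (∑ s ∈ range (min I F), b s) - ((min I F : ℕ) : R) * b F := by
  intro F
  induction F with
  | zero => simp
  | succ F ih =>
    rw [sum_range_succ, ih]
    rcases le_or_gt (F + 1) I with h | h
    · have h1 : min I F = F := by omega
      have h2 : min I (F + 1) = F + 1 := by omega
      rw [h1, h2, sum_range_succ]
      push_cast
      ring
    · have h1 : min I F = I := by omega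
      have h2 : min I (F + 1) = I := by omega
      rw [h1, h2]
      push_cast
      ring

-- pairing coefficient identity
lemma S9.pairc (n a b : ℕ) (hab : a + b ≤ n) :
    min b a * (n - max b a) + min (n - b) a * (n - max (n - b) a) = n * min a b := by
  rcases le_total a b with h | h
  · have e1 : min b a = a := by omega
    have e2 : max b a = b := by omega
    have e3 : min (n - b) a = a := by omega
    have e4 : max (n - b) a = n - b := by omega
    have e5 : n - (n - b) = b := by omega
    rw [e1, e2, e3, e4, e5, ← Nat.mul_add]
    have : n - b + b = n := by omega
    rw [this, Nat.mul_comm]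
    have : min a b = a := by omega
    rw [this]
  · have e1 : min b a = b := by omega
    have e2 : max b a = a := by omega
    have e3 : min (n - b) a = a := by omega
    have e4 : max (n - b) a = n - b := by omega
    have e5 : n - (n - b) = b := by omega
    rw [e1, e2, e3, e4, e5]
    have : min a b = b := by omega
    rw [this]
    zify [show a ≤ n by omega]
    ring

-- cardinality of the set of multiples of a in ZMod M, when a ∣ M
lemma S9.card_dmul (M a : ℕ) (hM : 0 < M) (ha : 0 < a) (hd : a ∣ M) :
    Nat.card {y : ZMod M // ∃ x : ZMod M, y = (a : ZMod M) * x} = M / a := by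
  haveI : NeZero M := ⟨hM.ne'⟩
  have hMa : 0 < M / a := Nat.div_pos (Nat.le_of_dvd hM hd) ha
  haveI : NeZero (M / a) := ⟨hMa.ne'⟩
  have key : Function.Bijective (fun t : ZMod (M / a) =>
      (⟨((a * t.val : ℕ) : ZMod M), ⟨((t.val : ℕ) : ZMod M), by push_cast; ring⟩⟩ :
        {y : ZMod M // ∃ x : ZMod M, y = (a : ZMod M) * x})) := by
    constructor
    · intro t s h
      have h2 : ((a * t.val : ℕ) : ZMod M) = ((a * s.val : ℕ) : ZMod M) := congrArg Subtype.val h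
      rw [ZMod.natCast_eq_natCast_iff] at h2
      have ht : a * t.val < M := by
        have := t.val_lt
        calc a * t.val < a * (M / a) := by exact (Nat.mul_lt_mul_left ha).2 this
        _ = M := Nat.mul_div_cancel' hd
      have hs : a * s.val < M := by
        have := s.val_lt
        calc a * s.val < a * (M / a) := by exact (Nat.mul_lt_mul_left ha).2 this
        _ = M := Nat.mul_div_cancel' hd
      have : a * t.val = a * s.val := by
        have : a * t.val % M = a * s.val % M := h2
        rwa [Nat.mod_eq_of_lt ht, Nat.mod_eq_of_lt hs] at this
      exact ZMod.val_injective _ (Nat.eq_of_mul_eq_mul_left ha this)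
    · rintro ⟨y, x, rfl⟩
      refine ⟨((x.val : ℕ) : ZMod (M / a)), ?_⟩
      apply Subtype.ext
      show ((a * (((x.val : ℕ) : ZMod (M/a))).val : ℕ) : ZMod M) = (a : ZMod M) * x
      rw [ZMod.val_natCast]
      have hmod : a * (x.val % (M / a)) ≡ a * x.val [MOD M] := by
        have h1 : x.val % (M / a) ≡ x.val [MOD (M / a)] := Nat.mod_modEq _ _
        have h2 := Nat.ModEq.mul_left' a h1
        exact Nat.ModEq.of_dvd (by rw [Nat.mul_div_cancel' hd]) h2
      calc ((a * (x.val % (M / a)) : ℕ) : ZMod M) = ((a * x.val : ℕ) : ZMod M) := by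
            rw [ZMod.natCast_eq_natCast_iff]; exact hmod
        _ = (a : ZMod M) * x := by
            push_cast
            rw [ZMod.natCast_val, ZMod.cast_id]
  calc Nat.card {y : ZMod M // ∃ x : ZMod M, y = (a : ZMod M) * x}
      = Nat.card (ZMod (M / a)) := (Nat.card_eq_of_bijective _ key).symm
    _ = M / a := Nat.card_zmod _


lemma S9.star (m' n k : ℕ) (hk : k + 1 = n)
    (G : Matrix (Fin k) (Fin k) (ZMod m'))
    (hG : ∀ i j : Fin k, G i j =
      ((min (i.val + 1) (j.val + 1) * (n - max (i.val + 1) (j.val + 1)) : ℕ) : ZMod m'))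
    (p : Fin k → ZMod m') (hp : ∀ i, p i = p i.rev)
    (i : Fin k) (hi : i.val < (k + 1) / 2) :
    ((2 : ZMod m') • Matrix.vecMul p G) i =
      (∑ s ∈ range (k / 2), ((2 * n * min (i.val + 1) (s + 1) : ℕ) : ZMod m') *
          (if h : s < k then p ⟨s, h⟩ else 0))
        + (if k % 2 = 1 then ((n * (i.val + 1) : ℕ) : ZMod m') *
            (if h : k / 2 < k then p ⟨k / 2, h⟩ else 0) else 0) := by
  set F := k / 2 with hF
  set g : ℕ → ZMod m' := fun j =>
    ((2 * (min (j + 1) (i.val + 1) * (n - max (j + 1) (i.val + 1))) : ℕ) : ZMod m') *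
      (if h : j < k then p ⟨j, h⟩ else 0) with hg
  have hk0 : 0 < k := i.pos
  -- Step 1
  have step1 : ((2 : ZMod m') • Matrix.vecMul p G) i = ∑ j ∈ range k, g j := by
    rw [← Fin.sum_univ_eq_sum_range g k]
    rw [Pi.smul_apply, smul_eq_mul, Matrix.vecMul, dotProduct, mul_sum]
    refine Finset.sum_congr rfl fun j _ => ?_
    rw [hg]
    simp only [j.isLt, dif_pos]
    have : p ⟨j.val, j.isLt⟩ = p j := by congr
    rw [this, hG j i]
    push_cast
    ring
  -- Step 2: split at F
  have hFle : F ≤ k := Nat.div_le_self _ _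
  have step2 : ∑ j ∈ range k, g j = ∑ j ∈ range F, g j + ∑ j ∈ Ico F k, g j :=
    (Finset.sum_range_add_sum_Ico g hFle).symm
  -- Step 3: mid
  have step3 : ∑ j ∈ Ico F k, g j
      = (if k % 2 = 1 then g F else 0) + ∑ j ∈ Ico (F + k % 2) k, g j := by
    rcases Nat.even_or_odd k with he | ho
    · have h2 : k % 2 = 0 := Nat.even_iff.mp he
      rw [h2, if_neg (by omega), zero_add, Nat.add_zero]
    · have h2 : k % 2 = 1 := Nat.odd_iff.mp ho
      have hFk : F < k := by omega
      rw [h2, if_pos rfl, sum_eq_sum_Ico_succ_bot hFk]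
  -- Step 4: reflect
  have step4 : ∑ j ∈ Ico (F + k % 2) k, g j = ∑ j ∈ range F, g (k - 1 - j) := by
    rw [sum_Ico_eq_sum_range]
    have e1 : k - (F + k % 2) = F := by omega
    rw [e1, ← sum_range_reflect (fun j => g (F + k % 2 + j)) F]
    refine Finset.sum_congr rfl fun j hj => ?_
    have hjF : j < F := mem_range.mp hj
    congr 1
    omega
  -- Step 5: combine pairs
  have step5 : ∑ j ∈ range F, g j + ∑ j ∈ range F, g (k - 1 - j)
      = ∑ s ∈ range F, ((2 * n * min (i.val + 1) (s + 1) : ℕ) : ZMod m') *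
          (if h : s < k then p ⟨s, h⟩ else 0) := by
    rw [← sum_add_distrib]
    refine Finset.sum_congr rfl fun s hs => ?_
    have hsF : s < F := mem_range.mp hs
    have hsk : s < k := by omega
    have hsk' : k - 1 - s < k := by omega
    rw [hg]
    simp only [hsk, hsk', dif_pos]
    have hrev : p ⟨k - 1 - s, hsk'⟩ = p ⟨s, hsk⟩ := by
      have := hp ⟨s, hsk⟩
      rw [this]
      congr 1
      apply Fin.ext
      simp only [Fin.val_rev, Fin.val_mk]
      omega
    rw [hrev, ← add_mul]
    congr 1
    have e2 : k - 1 - s + 1 = n - (s + 1) := by omega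
    rw [e2, ← Nat.cast_add]
    congr 1
    have hab : (i.val + 1) + (s + 1) ≤ n := by omega
    have hp2 := S9.pairc n (i.val + 1) (s + 1) hab
    calc 2 * (min (s + 1) (i.val + 1) * (n - max (s + 1) (i.val + 1)))
          + 2 * (min (n - (s + 1)) (i.val + 1) * (n - max (n - (s + 1)) (i.val + 1)))
        = 2 * (min (s + 1) (i.val + 1) * (n - max (s + 1) (i.val + 1))
          + min (n - (s + 1)) (i.val + 1) * (n - max (n - (s + 1)) (i.val + 1))) := by ring
      _ = 2 * (n * min (i.val + 1) (s + 1)) := by rw [hp2]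
      _ = 2 * n * min (i.val + 1) (s + 1) := by ring
  -- Step 6: mid value
  have step6 : (if k % 2 = 1 then g F else 0)
      = (if k % 2 = 1 then ((n * (i.val + 1) : ℕ) : ZMod m') *
          (if h : F < k then p ⟨F, h⟩ else 0) else 0) := by
    rcases Nat.even_or_odd k with he | ho
    · have h2 : k % 2 = 0 := Nat.even_iff.mp he
      rw [h2]; norm_num
    · have h2 : k % 2 = 1 := Nat.odd_iff.mp ho
      rw [h2, if_pos rfl, if_pos rfl]
      simp only [hg]
      congr 1
      have e1 : min (F + 1) (i.val + 1) = i.val + 1 := by omega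
      have e2 : max (F + 1) (i.val + 1) = F + 1 := by omega
      have e3 : n - (F + 1) = F + 1 := by omega
      rw [e1, e2, e3]
      have e4 : n = 2 * (F + 1) := by omega
      rw [e4]; ring
  rw [step1, step2, step3, step4, step6]
  linear_combination step5

theorem stmt9 (n m' : ℕ) (hn : 2 ≤ n) (hm : 0 < m') (heven : Even m')
    (G : Matrix (Fin (n - 1)) (Fin (n - 1)) (ZMod m'))
    (hG : ∀ i j : Fin (n - 1), G i j =
      ((min (i.val + 1) (j.val + 1) * (n - max (i.val + 1) (j.val + 1)) : ℕ) : ZMod m')) :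
    (∀ p : Fin (n - 1) → ZMod m', (∀ i, p i = p i.rev) →
      ∀ i : Fin (n - 1), ((2 : ZMod m') • Matrix.vecMul p G) i =
        ((2 : ZMod m') • Matrix.vecMul p G) i.rev) ∧
    Nat.card ((fun p : Fin (n - 1) → ZMod m' => (2 : ZMod m') • Matrix.vecMul p G) ''
        {p : Fin (n - 1) → ZMod m' | ∀ i, p i = p i.rev}) =
      (if Even n ∧ Odd (2 * n / Nat.gcd (2 * n) m')
       then 2 * (m' / Nat.gcd (2 * n) m') ^ (n / 2)
       else (m' / Nat.gcd (2 * n) m') ^ (n / 2)) := by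
  have hkn : (n - 1) + 1 = n := by omega
  haveI : NeZero m' := ⟨hm.ne'⟩
  set d := Nat.gcd (2 * n) m' with hd
  have hd0 : 0 < d := Nat.gcd_pos_of_pos_right _ hm
  have hddvd2n : d ∣ 2 * n := Nat.gcd_dvd_left _ _
  have hddvdm : d ∣ m' := Nat.gcd_dvd_right _ _
  obtain ⟨n', hn'⟩ : ∃ n', 2 * n = d * n' := hddvd2n
  have hddvd2n : d ∣ 2 * n := ⟨n', hn'⟩
  -- Bezout
  obtain ⟨β, hβ⟩ : ∃ β : ZMod m', (d : ZMod m') = ((2 * n : ℕ) : ZMod m') * β := by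
    refine ⟨((Nat.gcdA (2 * n) m' : ℤ) : ZMod m'), ?_⟩
    have h := Nat.gcd_eq_gcd_ab (2 * n) m'
    have hcast := congrArg (fun z : ℤ => ((z : ℤ) : ZMod m')) h
    push_cast at hcast
    rw [ZMod.natCast_self] at hcast
    simpa using hcast
  -- symmetry of G
  have hGsymm : ∀ a b : Fin (n - 1), G a.rev b.rev = G a b := by
    intro a b
    rw [hG, hG]
    congr 1
    have hA := a.isLt
    have hB := b.isLt
    have e1 : min (a.rev.val + 1) (b.rev.val + 1) = n - max (a.val + 1) (b.val + 1) := by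
      rw [Fin.val_rev, Fin.val_rev]; omega
    have e2 : max (a.rev.val + 1) (b.rev.val + 1) = n - min (a.val + 1) (b.val + 1) := by
      rw [Fin.val_rev, Fin.val_rev]; omega
    rw [e1, e2]
    have e3 : n - (n - min (a.val + 1) (b.val + 1)) = min (a.val + 1) (b.val + 1) := by omega
    rw [e3, Nat.mul_comm]
  -- part 1
  have part1 : ∀ p : Fin (n - 1) → ZMod m', (∀ i, p i = p i.rev) →
      ∀ i : Fin (n - 1), ((2 : ZMod m') • Matrix.vecMul p G) i =
        ((2 : ZMod m') • Matrix.vecMul p G) i.rev := by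
    intro p hp i
    simp only [Pi.smul_apply, smul_eq_mul, Matrix.vecMul, dotProduct]
    congr 1
    refine Fintype.sum_bijective Fin.rev Fin.rev_involutive.bijective _ _ fun j => ?_
    rw [hp j, hGsymm]
  refine ⟨part1, ?_⟩
  have star := S9.star m' n (n - 1) hkn G hG
  -- the map
  have hminlt : ∀ i : Fin (n - 1), min i.val (n - 2 - i.val) < n - 1 := fun i => by
    have := i.isLt; omega
  have hrevmin : ∀ i : Fin (n - 1), min (i.rev.val) (n - 2 - i.rev.val)
      = min i.val (n - 2 - i.val) := fun i => by
    have := i.isLt; rw [Fin.val_rev]; omega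
  have hhalfeq : ∀ p : Fin (n - 1) → ZMod m', (∀ i, p i = p i.rev) →
      ∀ i : Fin (n - 1), p i = p ⟨min i.val (n - 2 - i.val), hminlt i⟩ := by
    intro p hp i
    rcases le_or_gt i.val (n - 2 - i.val) with h | h
    · congr 1
      apply Fin.ext
      simp only [Fin.val_mk]
      omega
    · rw [hp i]
      congr 1
      apply Fin.ext
      simp only [Fin.val_rev, Fin.val_mk]
      have := i.isLt
      omega
  rcases Nat.even_or_odd n with hne | hno
  · -- n even
    obtain ⟨F, hF⟩ : ∃ F, n = 2 * F + 2 := by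
      obtain ⟨r, hr⟩ := hne; exact ⟨r - 1, by omega⟩
    have hFk : F < n - 1 := by omega
    have hg0 : 0 < Nat.gcd n m' := Nat.gcd_pos_of_pos_right _ hm
    set g' := Nat.gcd n m' with hg'
    have hgn : g' ∣ n := Nat.gcd_dvd_left _ _
    have hgm : g' ∣ m' := Nat.gcd_dvd_right _ _
    set M := m' / g' with hM
    have hM0 : 0 < M := Nat.div_pos (Nat.le_of_dvd hm hgm) hg0
    haveI : NeZero M := ⟨hM0.ne'⟩
    have hdvdnM : m' ∣ n * M := by
      obtain ⟨n₁, hn₁⟩ := hgn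
      obtain ⟨m₁, hm₁⟩ := hgm
      refine ⟨n₁, ?_⟩
      have hMm : M = m₁ := by rw [hM, hm₁, Nat.mul_div_cancel_left _ hg0]
      rw [hMm, hn₁, hm₁]; ring
    have hmodM : ∀ a : ℕ, ((n * (a % M) : ℕ) : ZMod m') = ((n * a : ℕ) : ZMod m') := by
      intro a
      rw [ZMod.natCast_eq_natCast_iff]
      exact Nat.ModEq.of_dvd hdvdnM (Nat.ModEq.mul_left' n (Nat.mod_modEq a M))
    have hcancel : ∀ t t' : ZMod M,
        ((n : ℕ) : ZMod m') * ((t.val : ℕ) : ZMod m')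
          = ((n : ℕ) : ZMod m') * ((t'.val : ℕ) : ZMod m') → t = t' := by
      intro t t' h
      rw [← Nat.cast_mul, ← Nat.cast_mul, ZMod.natCast_eq_natCast_iff] at h
      have h2 := Nat.ModEq.cancel_left_div_gcd hm h
      have hgg : m' / m'.gcd n = M := by rw [Nat.gcd_comm, ← hg', ← hM]
      rw [hgg] at h2
      have hlt := t.val_lt
      have hlt' := t'.val_lt
      have : t.val = t'.val := by
        have h3 : t.val % M = t'.val % M := h2
        rwa [Nat.mod_eq_of_lt hlt, Nat.mod_eq_of_lt hlt'] at h3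
      exact ZMod.val_injective _ this
    -- adapted star
    have star2 : ∀ p : Fin (n - 1) → ZMod m', (∀ i, p i = p i.rev) →
        ∀ s, ∀ hs : s < F + 1,
        ((2 : ZMod m') • Matrix.vecMul p G) ⟨s, by omega⟩ =
          (∑ t ∈ Finset.range F, ((2 * n * min (s + 1) (t + 1) : ℕ) : ZMod m') *
            (if h : t < n - 1 then p ⟨t, h⟩ else 0))
          + ((n * (s + 1) : ℕ) : ZMod m') * p ⟨F, hFk⟩ := by
      intro p hp s hs
      rw [star p hp ⟨s, by omega⟩ (by simp only [Fin.val_mk]; omega)]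
      have e1 : (n - 1) / 2 = F := by omega
      have e2 : (n - 1) % 2 = 1 := by omega
      simp only [Fin.val_mk, e1, e2, if_pos, dif_pos hFk]
    set Sd := {y : ZMod m' // ∃ x : ZMod m', y = (d : ZMod m') * x} with hSd
    have hminF : ∀ i : Fin (n - 1), min i.val (n - 2 - i.val) ≤ F := fun i => by
      have := i.isLt; omega
    set νf : ZMod M → ZMod m' := fun t => ((n : ℕ) : ZMod m') * ((t.val : ℕ) : ZMod m')
      with hνf
    set hfun : (ZMod M × (Fin F → Sd)) → ℕ → ZMod m' := fun z s =>
      ((s + 1 : ℕ) : ZMod m') * νf z.1 +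
        (if h : min s (F - 1) < F then (z.2 ⟨min s (F - 1), h⟩ : ZMod m') else 0) with hhfun
    set Θ : (ZMod M × (Fin F → Sd)) → (Fin (n - 1) → ZMod m') :=
      fun z i => hfun z (min i.val (n - 2 - i.val)) with hΘ
    have hYlt : ∀ z : ZMod M × (Fin F → Sd), ∀ s, ∀ hs : s < F,
        hfun z s = ((s + 1 : ℕ) : ZMod m') * νf z.1 + (z.2 ⟨s, hs⟩ : ZMod m') := by
      intro z s hs
      rw [hhfun]
      have h1 : min s (F - 1) = s := by omega
      simp only [h1, hs, dif_pos]
    have hYF : ∀ z : ZMod M × (Fin F → Sd), 1 ≤ F → ∀ hs : F - 1 < F,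
        hfun z F = ((F + 1 : ℕ) : ZMod m') * νf z.1 + (z.2 ⟨F - 1, hs⟩ : ZMod m') := by
      intro z hF1 hs
      rw [hhfun]
      have h1 : min F (F - 1) = F - 1 := by omega
      simp only [h1, hs, dif_pos]
    have hYF0 : ∀ z : ZMod M × (Fin F → Sd), F = 0 →
        hfun z F = ((F + 1 : ℕ) : ZMod m') * νf z.1 := by
      intro z hF0
      rw [hhfun]
      have h1 : ¬ (min F (F - 1) < F) := by omega
      simp only [h1, dif_neg, not_false_iff, add_zero]
    -- multiples of d in the sum
    have hsumd : ∀ p : Fin (n - 1) → ZMod m', ∀ s : ℕ,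
        ∃ x : ZMod m', (∑ t ∈ Finset.range F, ((2 * n * min (s + 1) (t + 1) : ℕ) : ZMod m') *
            (if h : t < n - 1 then p ⟨t, h⟩ else 0)) = (d : ZMod m') * x := by
      intro p s
      refine ⟨∑ t ∈ Finset.range F, ((n' * min (s + 1) (t + 1) : ℕ) : ZMod m') *
        (if h : t < n - 1 then p ⟨t, h⟩ else 0), ?_⟩
      rw [Finset.mul_sum]
      refine Finset.sum_congr rfl fun t _ => ?_
      rw [← mul_assoc, ← Nat.cast_mul]
      congr 2
      rw [hn']; ring
    -- image equals range of Θ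
    have himg : ((fun p : Fin (n - 1) → ZMod m' => (2 : ZMod m') • Matrix.vecMul p G) ''
        {p : Fin (n - 1) → ZMod m' | ∀ i, p i = p i.rev}) = Set.range Θ := by
      apply Set.ext
      intro q
      constructor
      · rintro ⟨p, hp, rfl⟩
        set e := p ⟨F, hFk⟩ with he
        set t : ZMod M := ((e.val : ℕ) : ZMod M) with ht
        have hνt : νf t = ((n : ℕ) : ZMod m') * e := by
          rw [hνf]
          simp only [ht, ZMod.val_natCast]
          rw [← Nat.cast_mul, hmodM, Nat.cast_mul, ZMod.natCast_val, ZMod.cast_id]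
        set y : Fin F → Sd := fun s => ⟨((2 : ZMod m') • Matrix.vecMul p G) ⟨s.val, by omega⟩
            - ((s.val + 1 : ℕ) : ZMod m') * (((n : ℕ) : ZMod m') * e), by
          obtain ⟨x, hx⟩ := hsumd p s.val
          refine ⟨x, ?_⟩
          rw [star2 p hp s.val (by omega), hx]
          push_cast
          ring⟩ with hy
        refine ⟨(t, y), ?_⟩
        funext i
        show hfun (t, y) (min i.val (n - 2 - i.val)) = ((2 : ZMod m') • Matrix.vecMul p G) i
        have hq : ∀ j, ((2 : ZMod m') • Matrix.vecMul p G) j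
            = ((2 : ZMod m') • Matrix.vecMul p G) j.rev := part1 p hp
        rw [hhalfeq _ hq i]
        have key : ∀ s, ∀ hs : s ≤ F,
            hfun (t, y) s = ((2 : ZMod m') • Matrix.vecMul p G) ⟨s, by omega⟩ := by
          intro s hs
          rcases Nat.lt_or_ge s F with hlt | hge
          · rw [hYlt (t, y) s hlt]
            have hyval : ((y ⟨s, hlt⟩ : Sd) : ZMod m')
                = ((2 : ZMod m') • Matrix.vecMul p G) ⟨s, by omega⟩
                  - ((s + 1 : ℕ) : ZMod m') * (((n : ℕ) : ZMod m') * e) := rfl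
            show ((s + 1 : ℕ) : ZMod m') * νf t + ((y ⟨s, hlt⟩ : Sd) : ZMod m') = _
            rw [hyval, hνt]
            ring
          · have hsF : s = F := by omega
            subst hsF
            rcases Nat.eq_zero_or_pos s with hF0 | hF1
            · rw [hYF0 (t, y) hF0]
              rw [star2 p hp s (by omega), hνt]
              have hre : Finset.range s = ∅ := by rw [hF0]; rfl
              rw [hre, Finset.sum_empty, zero_add, ← he]
              push_cast
              ring
            · rw [hYF (t, y) hF1 (by omega)]
              have hstF := star2 p hp s (by omega)
              have hstF1 := star2 p hp (s - 1) (by omega)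
              have hyval : ((y ⟨s - 1, by omega⟩ : Sd) : ZMod m')
                  = ((2 : ZMod m') • Matrix.vecMul p G) ⟨s - 1, by omega⟩
                    - ((s - 1 + 1 : ℕ) : ZMod m') * (((n : ℕ) : ZMod m') * e) := rfl
              have hsums : (∑ u ∈ Finset.range s, ((2 * n * min (s + 1) (u + 1) : ℕ) : ZMod m') *
                    (if h : u < n - 1 then p ⟨u, h⟩ else 0))
                  = ∑ u ∈ Finset.range s, ((2 * n * min (s - 1 + 1) (u + 1) : ℕ) : ZMod m') *
                    (if h : u < n - 1 then p ⟨u, h⟩ else 0) := by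
                refine Finset.sum_congr rfl fun u hu => ?_
                have huF := Finset.mem_range.mp hu
                have : min (s + 1) (u + 1) = min (s - 1 + 1) (u + 1) := by omega
                rw [this]
              have hFF : s - 1 + 1 = s := by omega
              rw [← he] at hstF hstF1
              rw [hνt, hyval]
              rw [hFF] at hstF1 hsums ⊢
              push_cast at hstF hstF1 hsums ⊢
              linear_combination hstF1 - hstF - hsums
        exact key _ (hminF i)
      · rintro ⟨z, rfl⟩
        obtain ⟨t, y⟩ := z
        set x : ℕ → ZMod m' := fun s => if h : s < F then Classical.choose (y ⟨s, h⟩).2 else 0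
          with hx
        have hxs : ∀ s (h : s < F), ((y ⟨s, h⟩) : ZMod m') = (d : ZMod m') * x s := by
          intro s h
          rw [hx]
          simp only [h, dif_pos]
          exact Classical.choose_spec (y ⟨s, h⟩).2
        set C : ℕ → ZMod m' := fun j => if j = 0 then 0 else β * x (j - 1) with hC
        set b : ℕ → ZMod m' := fun s => if s < F then C (s + 1) - C s else 0 with hb
        set p : Fin (n - 1) → ZMod m' := fun i =>
          if min i.val (n - 2 - i.val) = F then ((t.val : ℕ) : ZMod m')
          else b (min i.val (n - 2 - i.val)) - b (min i.val (n - 2 - i.val) + 1) with hP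
        have hp : ∀ i, p i = p i.rev := by
          intro i
          rw [hP]
          simp only [hrevmin i]
        have hpt : ∀ u, u < F → ∀ h2 : u < n - 1, p ⟨u, h2⟩ = b u - b (u + 1) := by
          intro u hu h2
          rw [hP]
          have h3 : min u (n - 2 - u) = u := by omega
          simp only [Fin.val_mk, h3]
          rw [if_neg (by omega)]
        have hpF : p ⟨F, hFk⟩ = ((t.val : ℕ) : ZMod m') := by
          rw [hP]
          have h3 : min F (n - 2 - F) = F := by omega
          simp only [Fin.val_mk, h3, if_true]
        -- the sum evaluates via C
        have hsum : ∀ s, s < F + 1 →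
            (∑ u ∈ Finset.range F, ((2 * n * min (s + 1) (u + 1) : ℕ) : ZMod m') *
              (if h : u < n - 1 then p ⟨u, h⟩ else 0))
            = ((2 * n : ℕ) : ZMod m') * C (min (s + 1) F) := by
          intro s hs
          have hterm : ∀ u ∈ Finset.range F,
              ((2 * n * min (s + 1) (u + 1) : ℕ) : ZMod m') *
                (if h : u < n - 1 then p ⟨u, h⟩ else 0)
              = ((2 * n : ℕ) : ZMod m') *
                (((min (s + 1) (u + 1) : ℕ) : ZMod m') * (b u - b (u + 1))) := by
            intro u hu
            have huF : u < F := Finset.mem_range.mp hu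
            have huk : u < n - 1 := by omega
            rw [dif_pos huk, hpt u huF huk, Nat.cast_mul, mul_assoc]
          rw [Finset.sum_congr rfl hterm, ← Finset.mul_sum, S9.abel]
          have hbF : b F = 0 := by rw [hb]; simp
          rw [hbF, mul_zero, sub_zero]
          congr 1
          have hminsF : min (s + 1) F ≤ F := by omega
          have hsum2 : ∑ u ∈ Finset.range (min (s + 1) F), b u
              = C (min (s + 1) F) - C 0 := by
            rw [← Finset.sum_range_sub C]
            refine Finset.sum_congr rfl fun u hu => ?_
            have huF : u < F := by
              have := Finset.mem_range.mp hu; omega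
            rw [hb]; simp only [huF, if_pos]
          rw [hsum2]
          have hC0 : C 0 = 0 := by rw [hC]; simp
          rw [hC0, sub_zero]
        have hkey : ∀ s, ∀ hs : s ≤ F,
            ((2 : ZMod m') • Matrix.vecMul p G) ⟨s, by omega⟩ = hfun (t, y) s := by
          intro s hs
          rw [star2 p hp s (by omega), hsum s (by omega), hpF]
          rcases Nat.lt_or_ge s F with hlt | hge
          · rw [hYlt (t, y) s hlt, hxs s hlt]
            have hm1 : min (s + 1) F = s + 1 := by omega
            rw [hm1]
            have hCs : C (s + 1) = β * x s := by
              rw [hC]; simp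
            rw [hCs]
            have hco : ((2 * n : ℕ) : ZMod m') * (β * x s) = (d : ZMod m') * x s := by
              rw [← mul_assoc, ← hβ]
            rw [hco]
            have hmid : ((n * (s + 1) : ℕ) : ZMod m') * ((t.val : ℕ) : ZMod m')
                = ((s + 1 : ℕ) : ZMod m') * νf t := by
              rw [hνf]; push_cast; ring
            rw [hmid]
            ring
          · have hsF : s = F := by omega
            subst hsF
            have hm1 : min (s + 1) s = s := by omega
            rw [hm1]
            rcases Nat.eq_zero_or_pos s with hF0 | hF1
            · rw [hYF0 (t, y) hF0]
              have hC0 : C s = 0 := by rw [hC]; simp [hF0]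
              rw [hC0, mul_zero, zero_add]
              rw [hνf]; push_cast; ring
            · rw [hYF (t, y) hF1 (by omega)]
              rw [hxs (s - 1) (by omega)]
              have hCs : C s = β * x (s - 1) := by
                simp only [hC]; rw [if_neg (by omega)]
              rw [hCs]
              have hco : ((2 * n : ℕ) : ZMod m') * (β * x (s - 1))
                  = (d : ZMod m') * x (s - 1) := by
                rw [← mul_assoc, ← hβ]
              rw [hco]
              have hmid : ((n * (s + 1) : ℕ) : ZMod m') * ((t.val : ℕ) : ZMod m')
                  = ((s + 1 : ℕ) : ZMod m') * νf t := by
                rw [hνf]; push_cast; ring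
              rw [hmid]
              ring
        refine ⟨p, hp, ?_⟩
        funext i
        show ((2 : ZMod m') • Matrix.vecMul p G) i = hfun (t, y) (min i.val (n - 2 - i.val))
        have hq : ∀ j, ((2 : ZMod m') • Matrix.vecMul p G) j
            = ((2 : ZMod m') • Matrix.vecMul p G) j.rev := part1 p hp
        rw [hhalfeq _ hq i, hkey _ (hminF i)]
    -- Θ injective
    have hinj : Function.Injective Θ := by
      intro z z' h
      have heval : ∀ s, s ≤ F → hfun z s = hfun z' s := by
        intro s hs
        have h1 := congrFun h ⟨s, by omega⟩
        rw [hΘ] at h1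
        simp only [Fin.val_mk] at h1
        have : min s (n - 2 - s) = s := by omega
        rwa [this] at h1
      have hνeq : νf z.1 = νf z'.1 := by
        rcases Nat.eq_zero_or_pos F with hF0 | hF1
        · have h0 := heval F (by omega)
          rw [hYF0 z hF0, hYF0 z' hF0] at h0
          have : ((F + 1 : ℕ) : ZMod m') = 1 := by rw [hF0]; norm_num
          rwa [this, one_mul, one_mul] at h0
        · have h0 := heval F (le_refl F)
          have h1 := heval (F - 1) (by omega)
          rw [hYF z hF1 (by omega), hYF z' hF1 (by omega)] at h0
          rw [hYlt z (F - 1) (by omega), hYlt z' (F - 1) (by omega)] at h1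
          have hFF : (F - 1) + 1 = F := by omega
          rw [hFF] at h1
          have hc : ((F + 1 : ℕ) : ZMod m') = ((F : ℕ) : ZMod m') + 1 := by push_cast; ring
          rw [hc] at h0
          linear_combination h0 - h1
      have ht : z.1 = z'.1 := hcancel _ _ hνeq
      have hy : z.2 = z'.2 := by
        funext s
        apply Subtype.ext
        have h1 := heval s.val (by omega)
        rw [hYlt z s.val s.isLt, hYlt z' s.val s.isLt] at h1
        rw [hνeq] at h1
        have h2 : (z.2 ⟨s.val, s.isLt⟩ : ZMod m') = (z'.2 ⟨s.val, s.isLt⟩ : ZMod m') := by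
          exact add_left_cancel h1
        have hmk : (⟨s.val, s.isLt⟩ : Fin F) = s := by apply Fin.ext; rfl
        rwa [hmk] at h2
      calc z = (z.1, z.2) := rfl
        _ = (z'.1, z'.2) := by rw [ht, hy]
        _ = z' := rfl
    -- count
    rw [himg, Nat.card_range_of_injective hinj, Nat.card_prod, Nat.card_zmod, Nat.card_pi]
    have hcard : Nat.card Sd = m' / d := S9.card_dmul m' d hm hd0 hddvdm
    rw [hcard, Finset.prod_const, Finset.card_univ, Fintype.card_fin]
    -- arithmetic
    have hgd : g' ∣ d := Nat.dvd_gcd (hgn.mul_left 2) hgm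
    have hn2 : n / 2 = F + 1 := by omega
    by_cases hdn : d ∣ n
    · have hdg : d = g' := Nat.dvd_antisymm (Nat.dvd_gcd hdn hddvdm) hgd
      have hcond : ¬ (Even n ∧ Odd (2 * n / d)) := by
        rintro ⟨-, hodd⟩
        obtain ⟨c, hc⟩ := hdn
        have h2nc : 2 * n = d * (2 * c) := by rw [hc]; ring
        have : 2 * n / d = 2 * c := by rw [h2nc, Nat.mul_div_cancel_left _ hd0]
        rw [this] at hodd
        exact (Nat.not_even_iff_odd.mpr hodd) ⟨c, by omega⟩
      rw [if_neg hcond, hn2, pow_succ]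
      rw [hM, ← hdg]
      ring
    · have hd2g : d ∣ 2 * g' := by
        have h1 : 2 * g' = Nat.gcd (2 * n) (2 * m') := by rw [Nat.gcd_mul_left]
        rw [h1]
        exact Nat.dvd_gcd hddvd2n (hddvdm.mul_left 2)
      obtain ⟨c, hcgd⟩ := hgd
      have hc2 : c ∣ 2 := by
        have h2 : g' * c ∣ g' * 2 := by
          rw [← hcgd, show g' * 2 = 2 * g' from by ring]
          exact hd2g
        exact (Nat.mul_dvd_mul_iff_left hg0).mp h2
      have hceq : c = 2 := by
        rcases (Nat.dvd_prime Nat.prime_two).mp hc2 with h1 | h2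
        · exfalso
          apply hdn
          rw [hcgd, h1, Nat.mul_one]
          exact hgn
        · exact h2
      have hdg2 : d = 2 * g' := by rw [hcgd, hceq]; ring
      have hodd : Odd (2 * n / d) := by
        have h1 : 2 * n / d = n / g' := by
          rw [hdg2]
          exact Nat.mul_div_mul_left n g' (by norm_num)
        rw [h1]
        rcases Nat.even_or_odd (n / g') with hev | hod
        · exfalso
          apply hdn
          obtain ⟨r, hr⟩ := hev
          have hng : g' * (n / g') = n := Nat.mul_div_cancel' hgn
          refine ⟨r, ?_⟩
          rw [hdg2, ← hng, hr]
          ring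
        · exact hod
      rw [if_pos ⟨hne, hodd⟩, hn2, pow_succ]
      obtain ⟨u, hu⟩ := hddvdm
      have hmd : m' / d = u := by rw [hu, Nat.mul_div_cancel_left _ hd0]
      have hMu : M = 2 * u := by
        rw [hM, hu, hdg2, show 2 * g' * u = g' * (2 * u) from by ring,
          Nat.mul_div_cancel_left _ hg0]
      rw [hmd, hMu]
      ring
  · -- n odd
    obtain ⟨F, hF⟩ : ∃ F, n = 2 * F + 1 := hno
    have hF1 : 1 ≤ F := by omega
    have hFhalf : (n - 1) / 2 = F := by omega
    have hFhalf2 : ((n - 1) + 1) / 2 = F := by omega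
    have hFmod : (n - 1) % 2 = 0 := by omega
    rw [hFhalf, hFhalf2, hFmod] at star
    simp only [Nat.zero_ne_one, if_false, add_zero] at star
    have hmin : ∀ i : Fin (n - 1), min i.val (n - 2 - i.val) < F := fun i => by
      have := i.isLt; omega
    have hsltk : ∀ s, s < F → s < n - 1 := fun s hs => by omega
    set Sd := {y : ZMod m' // ∃ x : ZMod m', y = (d : ZMod m') * x} with hSd
    set Θ : (Fin F → Sd) → (Fin (n - 1) → ZMod m') :=
      fun y i => (y ⟨min i.val (n - 2 - i.val), hmin i⟩ : ZMod m') with hΘ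
    -- value of ν p at small indices is a multiple of d
    have hval : ∀ p : Fin (n - 1) → ZMod m', (∀ i, p i = p i.rev) → ∀ s, ∀ hs : s < F,
        ∃ x : ZMod m', ((2 : ZMod m') • Matrix.vecMul p G) ⟨s, hsltk s hs⟩
          = (d : ZMod m') * x := by
      intro p hp s hs
      rw [star p hp ⟨s, hsltk s hs⟩ (by simpa using hs)]
      refine ⟨∑ t ∈ Finset.range F, ((n' * min (s + 1) (t + 1) : ℕ) : ZMod m') *
        (if h : t < n - 1 then p ⟨t, h⟩ else 0), ?_⟩
      rw [Finset.mul_sum]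
      refine Finset.sum_congr rfl fun t _ => ?_
      rw [← mul_assoc, ← Nat.cast_mul]
      congr 2
      simp only [Fin.val_mk]
      rw [hn']; ring
    -- image equals range of Θ
    have himg : ((fun p : Fin (n - 1) → ZMod m' => (2 : ZMod m') • Matrix.vecMul p G) ''
        {p : Fin (n - 1) → ZMod m' | ∀ i, p i = p i.rev}) = Set.range Θ := by
      apply Set.ext
      intro q
      constructor
      · rintro ⟨p, hp, rfl⟩
        refine ⟨fun s => ⟨((2 : ZMod m') • Matrix.vecMul p G) ⟨s.val, hsltk s.val s.isLt⟩,
          hval p hp s.val s.isLt⟩, ?_⟩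
        funext i
        show ((2 : ZMod m') • Matrix.vecMul p G) ⟨min i.val (n - 2 - i.val), _⟩
          = ((2 : ZMod m') • Matrix.vecMul p G) i
        have hq : ∀ j, ((2 : ZMod m') • Matrix.vecMul p G) j
            = ((2 : ZMod m') • Matrix.vecMul p G) j.rev := part1 p hp
        exact (hhalfeq _ hq i).symm
      · rintro ⟨y, rfl⟩
        -- construct a preimage
        set x : ℕ → ZMod m' := fun s => if h : s < F then Classical.choose (y ⟨s, h⟩).2 else 0
          with hx
        have hxs : ∀ s (h : s < F), ((y ⟨s, h⟩) : ZMod m') = (d : ZMod m') * x s := by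
          intro s h
          rw [hx]
          simp only [h, dif_pos]
          exact Classical.choose_spec (y ⟨s, h⟩).2
        set C : ℕ → ZMod m' := fun j => if j = 0 then 0 else β * x (j - 1) with hC
        set b : ℕ → ZMod m' := fun s => if s < F then C (s + 1) - C s else 0 with hb
        set p : Fin (n - 1) → ZMod m' :=
          fun i => b (min i.val (n - 2 - i.val)) - b (min i.val (n - 2 - i.val) + 1) with hP
        have hp : ∀ i, p i = p i.rev := by
          intro i
          rw [hP]
          simp only [hrevmin i]
        have hkey : ∀ s, ∀ hs : s < F,
            ((2 : ZMod m') • Matrix.vecMul p G) ⟨s, hsltk s hs⟩ = (y ⟨s, hs⟩ : ZMod m') := by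
          intro s hs
          rw [star p hp ⟨s, hsltk s hs⟩ (by simpa using hs)]
          have hterm : ∀ t ∈ Finset.range F,
              ((2 * n * min (s + 1) (t + 1) : ℕ) : ZMod m') *
                (if h : t < n - 1 then p ⟨t, h⟩ else 0)
              = ((2 * n : ℕ) : ZMod m') *
                (((min (s + 1) (t + 1) : ℕ) : ZMod m') * (b t - b (t + 1))) := by
            intro t ht
            have htF : t < F := Finset.mem_range.mp ht
            have htk : t < n - 1 := by omega
            rw [dif_pos htk]
            have hpt : p ⟨t, htk⟩ = b t - b (t + 1) := by
              rw [hP]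
              have : min t (n - 2 - t) = t := by omega
              simp only [Fin.val_mk, this]
            rw [hpt, Nat.cast_mul, mul_assoc]
          rw [Finset.sum_congr rfl hterm, ← Finset.mul_sum, S9.abel]
          have hbF : b F = 0 := by rw [hb]; simp
          have hminsF : min (s + 1) F = s + 1 := by omega
          rw [hbF, hminsF, mul_zero, sub_zero]
          have hsum : ∑ u ∈ Finset.range (s + 1), b u = C (s + 1) - C 0 := by
            rw [← Finset.sum_range_sub C (s + 1)]
            refine Finset.sum_congr rfl fun u hu => ?_
            have huF : u < F := by
              have := Finset.mem_range.mp hu; omega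
            rw [hb]; simp only [huF, if_pos]
          rw [hsum]
          have hC0 : C 0 = 0 := by rw [hC]; simp
          have hCs : C (s + 1) = β * x s := by
            rw [hC]; simp
          rw [hC0, sub_zero, hCs, hxs s hs, ← mul_assoc, ← hβ]
        refine ⟨p, hp, ?_⟩
        funext i
        show ((2 : ZMod m') • Matrix.vecMul p G) i = Θ y i
        have hq : ∀ j, ((2 : ZMod m') • Matrix.vecMul p G) j
            = ((2 : ZMod m') • Matrix.vecMul p G) j.rev := part1 p hp
        rw [hhalfeq _ hq i, hkey _ (hmin i)]
    -- Θ is injective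
    have hinj : Function.Injective Θ := by
      intro y y' h
      funext s
      apply Subtype.ext
      have hs := s.isLt
      have h1 := congrFun h ⟨s.val, hsltk s.val hs⟩
      rw [hΘ] at h1
      simp only at h1
      have hmineq : (⟨min (s.val) (n - 2 - s.val), hmin ⟨s.val, hsltk s.val hs⟩⟩ : Fin F)
          = s := by
        apply Fin.ext
        simp only [Fin.val_mk]
        omega
      rw [hmineq] at h1
      exact h1
    -- count
    rw [himg, Nat.card_range_of_injective hinj, Nat.card_pi]
    have hcard : Nat.card Sd = m' / d := S9.card_dmul m' d hm hd0 hddvdm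
    rw [hcard]
    rw [Finset.prod_const, Finset.card_univ, Fintype.card_fin]
    have hnotcond : ¬ (Even n ∧ Odd (2 * n / d)) := by
      rintro ⟨hc, -⟩
      exact Nat.not_even_iff_odd.mpr ⟨F, hF⟩ hc
    rw [if_neg hnotcond]
    congr 1
    omega
end

section
/- Let R be a commutative domain, q̂ ∈ R invertible with q̂^2 a primitive d-th root of unity, P an antisymmetric r×r integer matrix, and T(P) the associated quantum torus with Weyl-normalized monomials x^k for k ∈ ℤ^r. Then the center of T(P) equals the R-span of { x^k : k P k'^T ≡ 0 (mod d) for all k' ∈ ℤ^r }, equivalently the R-span of { x^k : every entry of the vector kP is ≡ 0 (mod d) }. -/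
theorem stmt14 (R : Type*) [CommRing R] [IsDomain R] (q : Rˣ) (d : ℕ) (hd : 0 < d)
    (hq : IsPrimitiveRoot ((q : R) ^ 2) d)
    (r : ℕ) (P : Matrix (Fin r) (Fin r) ℤ) (hP : P.transpose = -P)
    (A : Type*) [Ring A] [Algebra R A]
    (mono : (Fin r → ℤ) → A)
    (hindep : LinearIndependent R mono)
    (hspan : Submodule.span R (Set.range mono) = ⊤)
    (hone : mono 0 = 1)
    (hmul : ∀ k₁ k₂ : Fin r → ℤ, mono k₁ * mono k₂ =
      algebraMap R A ((q ^ (∑ i : Fin r, ∑ j : Fin r, k₁ i * P i j * k₂ j) : Rˣ) : R) *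
        mono (k₁ + k₂)) :
    Subalgebra.toSubmodule (Subalgebra.center R A) =
        Submodule.span R {a : A | ∃ k : Fin r → ℤ,
          (∀ k' : Fin r → ℤ, (d : ℤ) ∣ ∑ i : Fin r, ∑ j : Fin r, k i * P i j * k' j) ∧
          a = mono k} ∧
      Subalgebra.toSubmodule (Subalgebra.center R A) =
        Submodule.span R {a : A | ∃ k : Fin r → ℤ,
          (∀ j : Fin r, (d : ℤ) ∣ Matrix.vecMul k P j) ∧ a = mono k} := by
  -- pointwise antisymmetry of P
  have hPij : ∀ i j, P j i = -P i j := by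
    intro i j
    have := congrFun (congrFun hP i) j
    simpa [Matrix.transpose_apply] using this
  -- skew-symmetry of the bilinear form
  have skew : ∀ k k' : Fin r → ℤ,
      (∑ i : Fin r, ∑ j : Fin r, k' i * P i j * k j)
        = -(∑ i : Fin r, ∑ j : Fin r, k i * P i j * k' j) := by
    intro k k'
    rw [Finset.sum_comm, ← Finset.sum_neg_distrib]
    refine Finset.sum_congr rfl fun i _ => ?_
    rw [← Finset.sum_neg_distrib]
    refine Finset.sum_congr rfl fun j _ => ?_
    rw [hPij]; ring
  -- primitive root as a unit
  have hζ : IsPrimitiveRoot (q ^ 2 : Rˣ) d := by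
    apply IsPrimitiveRoot.coe_units_iff.mp
    simpa using hq
  have hdvd : ∀ n : ℤ, (q : Rˣ) ^ (2 * n) = 1 ↔ (d : ℤ) ∣ n := by
    intro n
    rw [← hζ.zpow_eq_one_iff_dvd n]
    constructor
    · intro h; rw [← zpow_natCast, ← zpow_mul]; exact_mod_cast h
    · intro h; rw [← zpow_natCast, ← zpow_mul] at h; exact_mod_cast h
  have hpow : ∀ n : ℤ, ((q : Rˣ) ^ n = q ^ (-n)) ↔ (d : ℤ) ∣ n := by
    intro n
    rw [← hdvd n, show 2 * n = n - (-n) by ring, zpow_sub, mul_inv_eq_one]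
  -- commutation of monomials
  have hcomm : ∀ k k' : Fin r → ℤ,
      (d : ℤ) ∣ (∑ i : Fin r, ∑ j : Fin r, k i * P i j * k' j) →
      mono k' * mono k = mono k * mono k' := by
    intro k k' h
    rw [hmul k' k, hmul k k', skew k k', (hpow _).mpr h, add_comm]
  -- equivalence of the two divisibility conditions
  have hcond : ∀ k : Fin r → ℤ,
      (∀ k' : Fin r → ℤ, (d : ℤ) ∣ ∑ i : Fin r, ∑ j : Fin r, k i * P i j * k' j) ↔
      (∀ j : Fin r, (d : ℤ) ∣ Matrix.vecMul k P j) := by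
    intro k
    constructor
    · intro h j
      have := h (Pi.single j 1)
      simpa [Matrix.vecMul, dotProduct, Pi.single_apply, mul_ite,
        Finset.sum_ite_eq'] using this
    · intro h k'
      have : (∑ i : Fin r, ∑ j : Fin r, k i * P i j * k' j)
          = ∑ j : Fin r, (Matrix.vecMul k P j) * k' j := by
        rw [Finset.sum_comm]
        refine Finset.sum_congr rfl fun j _ => ?_
        simp [Matrix.vecMul, dotProduct, Finset.sum_mul]
      rw [this]
      exact Finset.dvd_sum fun j _ => (h j).mul_right _
  -- main equality : center = span of first set
  have hmain : Subalgebra.toSubmodule (Subalgebra.center R A) =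
      Submodule.span R {a : A | ∃ k : Fin r → ℤ,
        (∀ k' : Fin r → ℤ, (d : ℤ) ∣ ∑ i : Fin r, ∑ j : Fin r, k i * P i j * k' j) ∧
        a = mono k} := by
    apply le_antisymm
    · -- center ⊆ span
      intro a ha
      rw [Subalgebra.mem_toSubmodule, Subalgebra.mem_center_iff] at ha
      have hmem : a ∈ Submodule.span R (Set.range mono) := hspan ▸ Submodule.mem_top
      obtain ⟨c, hc⟩ := Finsupp.mem_span_range_iff_exists_finsupp.mp hmem
      have key : ∀ k ∈ c.support, ∀ k' : Fin r → ℤ,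
          (d : ℤ) ∣ ∑ i : Fin r, ∑ j : Fin r, k i * P i j * k' j := by
        intro k hk k'
        have h1 : a * mono k' = ∑ k ∈ c.support,
            (c k * ((q ^ (∑ i : Fin r, ∑ j : Fin r, k i * P i j * k' j) : Rˣ) : R))
              • mono (k + k') := by
          rw [← hc, Finsupp.sum, Finset.sum_mul]
          refine Finset.sum_congr rfl fun m _ => ?_
          rw [smul_mul_assoc, hmul m k', ← Algebra.smul_def, smul_smul]
        have h2 : mono k' * a = ∑ k ∈ c.support,
            (c k * ((q ^ (-∑ i : Fin r, ∑ j : Fin r, k i * P i j * k' j) : Rˣ) : R))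
              • mono (k + k') := by
          rw [← hc, Finsupp.sum, Finset.mul_sum]
          refine Finset.sum_congr rfl fun m _ => ?_
          rw [mul_smul_comm, hmul k' m, skew m k', ← Algebra.smul_def, smul_smul, add_comm k' m]
        have h0 : ∑ m ∈ c.support,
            (c m * (((q ^ (∑ i : Fin r, ∑ j : Fin r, m i * P i j * k' j) : Rˣ) : R)
              - ((q ^ (-∑ i : Fin r, ∑ j : Fin r, m i * P i j * k' j) : Rˣ) : R)))
              • ((mono ∘ (· + k')) m) = 0 := by
          have : a * mono k' - mono k' * a = 0 := by rw [ha (mono k')]; exact sub_self _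
          rw [h1, h2, ← Finset.sum_sub_distrib] at this
          rw [← this]
          refine Finset.sum_congr rfl fun m _ => ?_
          simp only [Function.comp]
          rw [← sub_smul]; ring_nf
        have hli : LinearIndependent R (mono ∘ (· + k')) :=
          hindep.comp _ (add_left_injective k')
        have := linearIndependent_iff'.mp hli c.support _ h0 k hk
        have hck : c k ≠ 0 := Finsupp.mem_support_iff.mp hk
        have hsub : (((q ^ (∑ i : Fin r, ∑ j : Fin r, k i * P i j * k' j) : Rˣ) : R)
            - ((q ^ (-∑ i : Fin r, ∑ j : Fin r, k i * P i j * k' j) : Rˣ) : R)) = 0 := by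
          rcases mul_eq_zero.mp this with h | h
          · exact absurd h hck
          · exact h
        have : ((q ^ (∑ i : Fin r, ∑ j : Fin r, k i * P i j * k' j) : Rˣ) : R)
            = ((q ^ (-∑ i : Fin r, ∑ j : Fin r, k i * P i j * k' j) : Rˣ) : R) :=
          sub_eq_zero.mp hsub
        exact (hpow _).mp (Units.ext this)
      rw [← hc, Finsupp.sum]
      refine Submodule.sum_mem _ fun k hk => Submodule.smul_mem _ _ ?_
      exact Submodule.subset_span ⟨k, key k hk, rfl⟩
    · -- span ⊆ center
      rw [Submodule.span_le]
      rintro _ ⟨k, hk, rfl⟩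
      rw [SetLike.mem_coe, Subalgebra.mem_toSubmodule, Subalgebra.mem_center_iff]
      intro b
      have hb : b ∈ Submodule.span R (Set.range mono) := hspan ▸ Submodule.mem_top
      induction hb using Submodule.span_induction with
      | mem x hx =>
        obtain ⟨k', rfl⟩ := hx
        exact hcomm k k' (hk k')
      | zero => simp
      | add x y _ _ hx hy => rw [add_mul, mul_add, hx, hy]
      | smul c x _ hx => rw [smul_mul_assoc, mul_smul_comm, hx]
  constructor
  · exact hmain
  · rw [hmain]
    congr 1
    ext a
    simp only [Set.mem_setOf_eq]
    exact exists_congr fun k => and_congr_left' (hcond k)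
end
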